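/- arXiv:1410.4753 — 2 statements merged into one kernel-verified Lean document; each statement's English description precedes it below -/
import Mathlib

section
/- Let (X,T) be a compact Hausdorff dynamical system with a transitive point x*. The following are equivalent: (i) (X,T) is WAP; (ii) E(X,T) is abelian; (iii) p(q(x*)) = q(p(x*)) for all p,q ∈ E(X,T). When these hold, the evaluation map ev_{x*} : E(X,T) → X, p ↦ p(x*), is a homeomorphism satisfying ev_{x*}(T∘p) = T(ev_{x*}(p)) for all p ∈ E(X,T), and X contains exactly one minimal subset (nonempty closed invariant set containing no proper nonempty closed invariant subset). -/
open Filter Topology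

/-- The `n`-th iterate (for `n : ℤ`) of a homeomorphism `T`. -/
def hIter {X : Type*} [TopologicalSpace X] (T : X ≃ₜ X) (n : ℤ) : X → X :=
  fun x => (T.toEquiv ^ n) x

/-- The enveloping semigroup of `(X,T)`: the closure of `{Tⁿ : n ∈ ℤ}` in `X → X` with
the product (pointwise convergence) topology. -/
def envSG {X : Type*} [TopologicalSpace X] (T : X ≃ₜ X) : Set (X → X) :=
  closure (Set.range (hIter T))

/-- A minimal subset: a nonempty closed invariant set with no proper nonempty closed
invariant subset. -/
def IsMinimalSet {X : Type*} [TopologicalSpace X] (T : X ≃ₜ X) (M : Set X) : Prop :=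
  M.Nonempty ∧ IsClosed M ∧ ⇑T '' M = M ∧
    ∀ M' ⊆ M, M'.Nonempty → IsClosed M' → ⇑T '' M' = M' → M' = M

/-! Each `Tⁿ` commutes with every `p ∈ E(X,T)`: commuting with a fixed continuous map is a
closed condition on `p`, and it holds on the dense set of iterates. The same argument shows that
a continuous `p ∈ E(X,T)` commutes with all of `E(X,T)`.

Conversely, `E(X,T)` is compact and `x*` is transitive, so `p ↦ p x*` maps `E(X,T)` onto `X`.
If elements of `E(X,T)` commute at `x*`, this map is injective (`p (r x*) = r (p x*)` for all `r`),
hence a homeomorphism `e`, and `p x = e⁻¹(x) (p x*)` exhibits `p` as continuous. Two minimal sets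
containing `p₁ x*` and `p₂ x*` both contain `p₂ (p₁ x*) = p₁ (p₂ x*)`, so they coincide. -/

section Iterates

variable {X : Type*} [TopologicalSpace X] (T : X ≃ₜ X)

theorem hIter_eq_coe_zpow (n : ℤ) : hIter T n = ⇑(T ^ n) := by
  let toPerm : (X ≃ₜ X) →* Equiv.Perm X := ⟨⟨Homeomorph.toEquiv, rfl⟩, fun _ _ => rfl⟩
  funext x
  exact congrArg (· x) (map_zpow toPerm T n).symm

theorem hIter_add (m n : ℤ) : hIter T (m + n) = hIter T m ∘ hIter T n := by
  simp only [hIter_eq_coe_zpow, zpow_add]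
  rfl

theorem hIter_one_add (n : ℤ) : hIter T (1 + n) = ⇑T ∘ hIter T n := by
  simp only [hIter_eq_coe_zpow, zpow_one_add]
  rfl

theorem continuous_hIter (n : ℤ) : Continuous (hIter T n) :=
  hIter_eq_coe_zpow T n ▸ (T ^ n).continuous

/- `T '' M = M` says that `T` stabilizes `M` under the pointwise action of `Equiv.Perm X` on sets,
and `hIter T n` is the `n`-th power of `T` in that group. -/
open Pointwise in
theorem image_hIter_of_image_eq {M : Set X} (hM : ⇑T '' M = M) (n : ℤ) : hIter T n '' M = M :=
  (MulAction.stabilizer (Equiv.Perm X) M).zpow_mem (x := T.toEquiv) hM n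

end Iterates

section EnvelopingSemigroup

variable {X : Type*} [TopologicalSpace X] (T : X ≃ₜ X)

theorem hIter_mem_envSG (n : ℤ) : hIter T n ∈ envSG T :=
  subset_closure ⟨n, rfl⟩

theorem isCompact_envSG [CompactSpace X] : IsCompact (envSG T) :=
  isClosed_closure.isCompact

variable {T}

theorem comp_mem_envSG {p : X → X} (hp : p ∈ envSG T) : ⇑T ∘ p ∈ envSG T :=
  map_mem_closure (Pi.continuous_postcomp T.continuous) hp <| by
    rintro _ ⟨n, rfl⟩
    exact ⟨1 + n, hIter_one_add T n⟩

theorem IsClosed.apply_mem_of_mem_envSG {M : Set X} (hMc : IsClosed M) (hM : ⇑T '' M = M)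
    {x : X} (hx : x ∈ M) {p : X → X} (hp : p ∈ envSG T) : p x ∈ M :=
  closure_minimal (Set.range_subset_iff.2 fun n => image_hIter_of_image_eq T hM n ▸ ⟨x, hx, rfl⟩)
    (hMc.preimage (continuous_apply x)) hp

theorem Continuous.comp_comm_of_mem_envSG [T2Space X] {p : X → X} (hpc : Continuous p)
    (hpT : ∀ n, p ∘ hIter T n = hIter T n ∘ p) {q : X → X} (hq : q ∈ envSG T) :
    p ∘ q = q ∘ p :=
  closure_minimal (Set.range_subset_iff.2 hpT)
    (isClosed_eq (Pi.continuous_postcomp hpc) (Pi.continuous_precomp p)) hq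

theorem hIter_comp_comm [T2Space X] (n : ℤ) {q : X → X} (hq : q ∈ envSG T) :
    hIter T n ∘ q = q ∘ hIter T n :=
  (continuous_hIter T n).comp_comm_of_mem_envSG
    (fun m => by rw [← hIter_add, ← hIter_add, add_comm]) hq

theorem comp_comm_of_continuous [T2Space X] {p q : X → X} (hp : p ∈ envSG T)
    (hpc : Continuous p) (hq : q ∈ envSG T) : p ∘ q = q ∘ p :=
  hpc.comp_comm_of_mem_envSG (fun n => (hIter_comp_comm n hp).symm) hq

end EnvelopingSemigroup

section MinimalSets

variable {X : Type*} [TopologicalSpace X] {T : X ≃ₜ X}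

theorem IsMinimalSet.eq_of_inter_nonempty {M₁ M₂ : Set X} (h₁ : IsMinimalSet T M₁)
    (h₂ : IsMinimalSet T M₂) (hne : (M₁ ∩ M₂).Nonempty) : M₁ = M₂ := by
  obtain ⟨-, hcl₁, hinv₁, hmin₁⟩ := h₁
  obtain ⟨-, hcl₂, hinv₂, hmin₂⟩ := h₂
  have hcl := hcl₁.inter hcl₂
  have hinv : ⇑T '' (M₁ ∩ M₂) = M₁ ∩ M₂ := by rw [Set.image_inter T.injective, hinv₁, hinv₂]
  exact (hmin₁ _ Set.inter_subset_left hne hcl hinv).symm.trans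
    (hmin₂ _ Set.inter_subset_right hne hcl hinv)

variable (T) in
theorem exists_isMinimalSet [CompactSpace X] [Nonempty X] : ∃ M, IsMinimalSet T M := by
  let S := {M : Set X | M.Nonempty ∧ IsClosed M ∧ ⇑T '' M = M}
  have chain_bound : ∀ c ⊆ S, IsChain (· ⊆ ·) c → c.Nonempty → ∃ lb ∈ S, ∀ M ∈ c, lb ⊆ M := by
    intro c hcS hc hcne
    have : Nonempty c := hcne.to_subtype
    refine ⟨⋂₀ c, ⟨?_, isClosed_sInter fun M hM => (hcS hM).2.1, ?_⟩,
      fun _ => Set.sInter_subset_of_mem⟩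
    · exact IsCompact.nonempty_sInter_of_directed_nonempty_isCompact_isClosed
        (fun M hM N hN => (hc.total hM hN).elim (fun h => ⟨M, hM, subset_rfl, h⟩)
          fun h => ⟨N, hN, h, subset_rfl⟩) (fun M hM => (hcS hM).1) (fun M hM => (hcS hM).2.1.isCompact)
        (fun M hM => (hcS hM).2.1)
    · rw [Set.sInter_eq_biInter, Set.image_iInter₂ T.bijective]
      exact Set.iInter₂_congr fun M hM => (hcS hM).2.2
  have huniv : Set.univ ∈ S :=
    ⟨Set.univ_nonempty, isClosed_univ, by rw [Set.image_univ, T.surjective.range_eq]⟩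
  obtain ⟨M, -, hM⟩ := zorn_superset_nonempty S chain_bound _ huniv
  exact ⟨M, hM.prop.1, hM.prop.2.1, hM.prop.2.2,
    fun M' hM'M hne hcl hinv => hM.eq_of_subset ⟨hne, hcl, hinv⟩ hM'M⟩

end MinimalSets

section TransitivePoint

variable {X : Type*} [TopologicalSpace X] [CompactSpace X] [T2Space X] {T : X ≃ₜ X} {xs : X}

theorem exists_mem_envSG_apply_eq (hxs : Dense (Set.range fun n : ℤ => hIter T n xs)) (x : X) :
    ∃ p ∈ envSG T, p xs = x := by
  have hclosed : IsClosed ((fun p : X → X => p xs) '' envSG T) :=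
    ((isCompact_envSG T).image (continuous_apply xs)).isClosed
  have horbit : (Set.range fun n : ℤ => hIter T n xs) ⊆ (fun p : X → X => p xs) '' envSG T :=
    Set.range_subset_iff.2 fun n => ⟨_, hIter_mem_envSG T n, rfl⟩
  exact hclosed.closure_subset_iff.2 horbit (hxs x)

theorem bijective_eval_envSG (hxs : Dense (Set.range fun n : ℤ => hIter T n xs))
    (hcomm : ∀ p ∈ envSG T, ∀ q ∈ envSG T, p (q xs) = q (p xs)) :
    Function.Bijective fun p : envSG T => (p : X → X) xs := by
  constructor
  · rintro ⟨p, hp⟩ ⟨q, hq⟩ (hpq : p xs = q xs)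
    refine Subtype.ext <| funext fun x => ?_
    obtain ⟨r, hr, rfl⟩ := exists_mem_envSG_apply_eq hxs x
    change p (r xs) = q (r xs)
    rw [hcomm p hp r hr, hpq, hcomm q hq r hr]
  · intro x
    obtain ⟨p, hp, rfl⟩ := exists_mem_envSG_apply_eq hxs x
    exact ⟨⟨p, hp⟩, rfl⟩

noncomputable def evalHomeomorph (hxs : Dense (Set.range fun n : ℤ => hIter T n xs))
    (hcomm : ∀ p ∈ envSG T, ∀ q ∈ envSG T, p (q xs) = q (p xs)) : envSG T ≃ₜ X :=
  haveI : CompactSpace (envSG T) := isCompact_iff_compactSpace.1 (isCompact_envSG T)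
  Continuous.homeoOfEquivCompactToT2 (f := Equiv.ofBijective _ (bijective_eval_envSG hxs hcomm))
    ((continuous_apply xs).comp continuous_subtype_val)

theorem evalHomeomorph_apply (hxs : Dense (Set.range fun n : ℤ => hIter T n xs))
    (hcomm : ∀ p ∈ envSG T, ∀ q ∈ envSG T, p (q xs) = q (p xs)) (p : envSG T) :
    evalHomeomorph hxs hcomm p = (p : X → X) xs :=
  rfl

theorem continuous_of_mem_envSG_of_comm (hxs : Dense (Set.range fun n : ℤ => hIter T n xs))
    (hcomm : ∀ p ∈ envSG T, ∀ q ∈ envSG T, p (q xs) = q (p xs)) {p : X → X}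
    (hp : p ∈ envSG T) : Continuous p := by
  let e := evalHomeomorph hxs hcomm
  have hp_eq (x : X) : (e.symm x : X → X) (p xs) = p x := by
    conv_rhs => rw [← e.apply_symm_apply x, evalHomeomorph_apply]
    exact (hcomm p hp _ (e.symm x).2).symm
  exact ((continuous_apply (p xs)).comp (continuous_subtype_val.comp e.symm.continuous)).congr
    hp_eq

theorem isMinimalSet_eq_of_comm (hxs : Dense (Set.range fun n : ℤ => hIter T n xs))
    (hcomm : ∀ p ∈ envSG T, ∀ q ∈ envSG T, p (q xs) = q (p xs)) {M₁ M₂ : Set X}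
    (h₁ : IsMinimalSet T M₁) (h₂ : IsMinimalSet T M₂) : M₁ = M₂ := by
  obtain ⟨x₁, hx₁⟩ := h₁.1
  obtain ⟨x₂, hx₂⟩ := h₂.1
  obtain ⟨p₁, hp₁, rfl⟩ := exists_mem_envSG_apply_eq hxs x₁
  obtain ⟨p₂, hp₂, rfl⟩ := exists_mem_envSG_apply_eq hxs x₂
  refine h₁.eq_of_inter_nonempty h₂ ⟨p₂ (p₁ xs), h₁.2.1.apply_mem_of_mem_envSG h₁.2.2.1 hx₁ hp₂, ?_⟩
  rw [hcomm p₂ hp₂ p₁ hp₁]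
  exact h₂.2.1.apply_mem_of_mem_envSG h₂.2.2.1 hx₂ hp₁

end TransitivePoint

theorem stmt1_general {X : Type*} [TopologicalSpace X] [CompactSpace X] [T2Space X]
    (T : X ≃ₜ X) (xs : X) (hxs : Dense (Set.range fun n : ℤ => hIter T n xs)) :
    ((∀ p ∈ envSG T, Continuous p) ↔
      (∀ p ∈ envSG T, ∀ q ∈ envSG T, ∀ x : X, p (q x) = q (p x))) ∧
    ((∀ p ∈ envSG T, Continuous p) ↔
      (∀ p ∈ envSG T, ∀ q ∈ envSG T, p (q xs) = q (p xs))) ∧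
    ((∀ p ∈ envSG T, Continuous p) →
      ((∃ h : ↥(envSG T) ≃ₜ X, ∀ p : ↥(envSG T), h p = (p : X → X) xs) ∧
       (∀ p ∈ envSG T, (⇑T ∘ p) ∈ envSG T ∧ (⇑T ∘ p) xs = T (p xs)) ∧
       (∃! M : Set X, IsMinimalSet T M))) := by
  have comm_of_wap (hwap : ∀ p ∈ envSG T, Continuous p) :
      ∀ p ∈ envSG T, ∀ q ∈ envSG T, ∀ x : X, p (q x) = q (p x) :=
    fun p hp q hq => congrFun (comp_comm_of_continuous hp (hwap p hp) hq)
  have wap_of_comm_at (hcomm : ∀ p ∈ envSG T, ∀ q ∈ envSG T, p (q xs) = q (p xs)) :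
      ∀ p ∈ envSG T, Continuous p :=
    fun _ => continuous_of_mem_envSG_of_comm hxs hcomm
  refine ⟨⟨comm_of_wap, fun hcomm => wap_of_comm_at fun p hp q hq => hcomm p hp q hq xs⟩,
    ⟨fun hwap p hp q hq => comm_of_wap hwap p hp q hq xs, wap_of_comm_at⟩, fun hwap => ?_⟩
  have hcomm := fun p hp q hq => comm_of_wap hwap p hp q hq xs
  have : Nonempty X := ⟨xs⟩
  obtain ⟨M, hM⟩ := exists_isMinimalSet T
  exact ⟨⟨evalHomeomorph hxs hcomm, evalHomeomorph_apply hxs hcomm⟩,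
    fun p hp => ⟨comp_mem_envSG hp, rfl⟩,
    ⟨M, hM, fun M' hM' => isMinimalSet_eq_of_comm hxs hcomm hM' hM⟩⟩

/-- For a compact Hausdorff system `(X,T)` with transitive point `x*`:
WAP ↔ the enveloping semigroup is abelian ↔ all elements of the enveloping semigroup
commute at `x*`; and in that case the evaluation map `p ↦ p x*` is a homeomorphism from
the enveloping semigroup onto `X`, it intertwines `p ↦ T ∘ p` with `T`, and `X` has a
unique minimal subset. -/
theorem stmt1 {X : Type*} [TopologicalSpace X] [CompactSpace X] [T2Space X] [Nonempty X]
    (T : X ≃ₜ X) (xs : X) (hxs : Dense (Set.range fun n : ℤ => hIter T n xs)) :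
    ((∀ p ∈ envSG T, Continuous p) ↔
      (∀ p ∈ envSG T, ∀ q ∈ envSG T, ∀ x : X, p (q x) = q (p x))) ∧
    ((∀ p ∈ envSG T, Continuous p) ↔
      (∀ p ∈ envSG T, ∀ q ∈ envSG T, p (q xs) = q (p xs))) ∧
    ((∀ p ∈ envSG T, Continuous p) →
      ((∃ h : ↥(envSG T) ≃ₜ X, ∀ p : ↥(envSG T), h p = (p : X → X) xs) ∧
       (∀ p ∈ envSG T, (⇑T ∘ p) ∈ envSG T ∧ (⇑T ∘ p) xs = T (p xs)) ∧
       (∃! M : Set X, IsMinimalSet T M))) :=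
  stmt1_general T xs hxs
end

section
/- With the standing labeled-subshift setup, the maps 𝓜 ↦ x[𝓜] and 𝓜 ↦ x₊[𝓜] from the space of labels 𝓛𝓐𝓑 into {0,1}^ℤ are injective and continuous, and hence are homeomorphisms onto their images. -/
open Filter Topology

/-- `k : ℤ → ℤ` is `b`-expanding: `k(−n) = −k(n)` and `k(n+1) > b·Σ_{i=0}^{n} k(i)` for all
`n ≥ 0`. -/
def IsExpanding (b : ℕ) (k : ℤ → ℤ) : Prop :=
  (∀ n : ℤ, k (-n) = - k n) ∧
  ∀ n : ℕ, (b : ℤ) * ∑ i ∈ Finset.range (n + 1), k (i : ℤ) < k ((n : ℤ) + 1)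

/-- `j : Fin r → ℤ` is an expansion of `t`: nonzero entries with strictly decreasing absolute
values whose `k`-values sum to `t`. -/
def IsExpansion (k : ℤ → ℤ) (t : ℤ) (r : ℕ) (j : Fin r → ℤ) : Prop :=
  (∀ i : Fin r, j i ≠ 0) ∧ (∀ i₁ i₂ : Fin r, i₁ < i₂ → |j i₂| < |j i₁|) ∧
  t = ∑ i : Fin r, k (j i)

/-- `IP(k)`: the set of sums of finite subsets of the image set `k(ℤ)`. -/
def IPk (k : ℤ → ℤ) : Set ℤ :=
  {t | ∃ F : Finset ℤ, ↑F ⊆ Set.range k ∧ t = ∑ x ∈ F, x}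

/-- `IP₊(k)`: the set of sums of finite subsets of the image set `k(ℕ)` (positive arguments). -/
def IPkP (k : ℤ → ℤ) : Set ℤ :=
  {t | ∃ F : Finset ℤ, ↑F ⊆ k '' {j : ℤ | 0 < j} ∧ t = ∑ x ∈ F, x}

/-- A label: a hereditary set of ℕ-vectors (finitely supported functions `ℕ → ℕ`). -/
def IsLabel (M : Set (ℕ →₀ ℕ)) : Prop :=
  ∀ m₁ m : ℕ →₀ ℕ, m₁ ≤ m → m ∈ M → m₁ ∈ M

/-- `𝓜 − r = {w : w + r ∈ 𝓜}`. -/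
def Msub (M : Set (ℕ →₀ ℕ)) (r : ℕ →₀ ℕ) : Set (ℕ →₀ ℕ) := {w | w + r ∈ M}

/-- Specification of the partition data: each `D ℓ` is infinite, the `D ℓ` are pairwise
disjoint, and `lab n` is the index of the cell containing `n` (so the `D ℓ` cover `ℕ`). -/
def PartitionSpec (D : ℕ → Set ℕ) (lab : ℕ → ℕ) : Prop :=
  (∀ ℓ : ℕ, (D ℓ).Infinite) ∧ (∀ ℓ₁ ℓ₂ : ℕ, ℓ₁ ≠ ℓ₂ → D ℓ₁ ∩ D ℓ₂ = ∅) ∧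
  (∀ n : ℕ, n ∈ D (lab n))

/-- Specification that `R t` is the length vector `𝐫(t)` of the (unique) expansion of each
expanding time `t`. -/
def LengthVecSpec (k : ℤ → ℤ) (lab : ℕ → ℕ) (R : ℤ → ℕ →₀ ℕ) : Prop :=
  ∀ (t : ℤ) (r : ℕ) (j : Fin r → ℤ), IsExpansion k t r j →
    R t = ∑ i : Fin r, Finsupp.single (lab (j i).natAbs) 1

/-- `A[𝓜] = {t ∈ IP(k) : 𝐫(t) ∈ 𝓜}`. -/
def setA (k : ℤ → ℤ) (R : ℤ → ℕ →₀ ℕ) (M : Set (ℕ →₀ ℕ)) : Set ℤ :=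
  {t | t ∈ IPk k ∧ R t ∈ M}

/-- `A₊[𝓜] = A[𝓜] ∩ IP₊(k)`. -/
def setAP (k : ℤ → ℤ) (R : ℤ → ℕ →₀ ℕ) (M : Set (ℕ →₀ ℕ)) : Set ℤ :=
  setA k R M ∩ IPkP k

/-- The indicator point `χ(A) ∈ {0,1}^ℤ` of a set `A ⊆ ℤ`. -/
noncomputable def chiB (A : Set ℤ) : ℤ → Bool :=
  fun t => @decide (t ∈ A) (Classical.propDecidable _)

/-- `x[𝓜] = χ(A[𝓜])`. -/
noncomputable def xL (k : ℤ → ℤ) (R : ℤ → ℕ →₀ ℕ) (M : Set (ℕ →₀ ℕ)) : ℤ → Bool :=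
  chiB (setA k R M)

/-- `x₊[𝓜] = χ(A₊[𝓜])`. -/
noncomputable def xLP (k : ℤ → ℤ) (R : ℤ → ℕ →₀ ℕ) (M : Set (ℕ →₀ ℕ)) : ℤ → Bool :=
  chiB (setAP k R M)

/-- The iterated shift `Sⁿ` on `{0,1}^ℤ`: `(Sⁿx)_s = x_{s+n}`. -/
def shiftZ (n : ℤ) (x : ℤ → Bool) : ℤ → Bool := fun s => x (s + n)

/-- The standard metric on `{0,1}^ℤ`: `d(x,y) = inf {2^{-N} : x_t = y_t for all |t| < N}`. -/
noncomputable def bdist (x y : ℤ → Bool) : ℝ :=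
  sInf {r : ℝ | ∃ N : ℕ, (∀ t : ℤ, |t| < (N : ℤ) → x t = y t) ∧ r = (2 : ℝ) ^ (-(N : ℤ))}

/-- The indicator function of a set of ℕ-vectors, valued in the (discrete) two-point space. -/
noncomputable def labelInd (M : Set (ℕ →₀ ℕ)) : (ℕ →₀ ℕ) → Bool :=
  fun m => @decide (m ∈ M) (Classical.propDecidable _)

/-- The topology of the space of labels: the subspace topology induced from the product
topology on the power set of the set of ℕ-vectors (equivalently, the topology of the
ultrametric `d(𝓜₁,𝓜₂) = inf {2^{−N} : 𝓜₁ ∩ 𝓑_N = 𝓜₂ ∩ 𝓑_N}`). -/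
noncomputable def labTop : TopologicalSpace (Set (ℕ →₀ ℕ)) :=
  TopologicalSpace.induced labelInd inferInstance

/-- The space `𝓛𝓐𝓑` of labels. -/
def Lab : Type := {M : Set (ℕ →₀ ℕ) // IsLabel M}

/-- The topology of `𝓛𝓐𝓑`. -/
noncomputable def labTopL : TopologicalSpace Lab :=
  TopologicalSpace.induced (Subtype.val : Lab → Set (ℕ →₀ ℕ)) labTop

/-! Every ℕ-vector `m` is the length vector of some `t = Σ_{n ∈ J} k(n) ∈ IP₊(k)`: take `m(ℓ)`
positive elements of `D_ℓ` for each `ℓ`, and list them in decreasing order to get the expansion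
of `t` (the values `k(n)` are distinct since `k` is increasing on `ℕ`). Reading `x[𝓜]` or
`x₊[𝓜]` along such a section `m ↦ t` therefore returns the indicator of `𝓜`, while every
coordinate of `x[𝓜]` is either `0` or a single coordinate `[𝐫(t) ∈ 𝓜]` of that indicator.
So both maps factor the embedding `𝓜 ↦ χ(𝓜)` of `𝓛𝓐𝓑` into `{0,1}^{ℕ-vectors}` through
continuous maps in both directions. -/

namespace IsExpanding

variable {b : ℕ} {k : ℤ → ℤ}

theorem map_zero (hk : IsExpanding b k) : k 0 = 0 := by
  have h := hk.1 0
  rw [neg_zero] at h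
  omega

theorem nonneg (hk : IsExpanding b k) (n : ℕ) : 0 ≤ k n := by
  induction n using Nat.strong_induction_on with
  | _ n ih =>
    rcases n with _ | n
    · exact (map_zero hk).ge
    · have hsum : 0 ≤ ∑ i ∈ Finset.range (n + 1), k i :=
        Finset.sum_nonneg fun i hi => ih i (Finset.mem_range.mp hi)
      exact_mod_cast (mul_nonneg (Nat.cast_nonneg b) hsum).trans (hk.2 n).le

theorem strictMono (hk : IsExpanding b k) (hb : 1 ≤ b) : StrictMono fun n : ℕ => k n := by
  refine strictMono_nat_of_lt_succ fun n => ?_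
  have hsum : 0 ≤ ∑ i ∈ Finset.range (n + 1), k i :=
    Finset.sum_nonneg fun i _ => hk.nonneg i
  have hb' : (1 : ℤ) ≤ b := by exact_mod_cast hb
  calc k n ≤ ∑ i ∈ Finset.range (n + 1), k i :=
        Finset.single_le_sum (fun i _ => hk.nonneg i) (Finset.self_mem_range_succ n)
    _ ≤ b * ∑ i ∈ Finset.range (n + 1), k i := le_mul_of_one_le_left hsum hb'
    _ < k (n + 1) := by exact_mod_cast hk.2 n

end IsExpanding

theorem IPkP_subset_IPk (k : ℤ → ℤ) : IPkP k ⊆ IPk k :=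
  fun _ ⟨F, hF, ht⟩ => ⟨F, hF.trans (Set.image_subset_range _ _), ht⟩

theorem sum_mem_IPkP {k : ℤ → ℤ} (hk : Function.Injective fun n : ℕ => k n) {J : Finset ℕ}
    (hJ : ∀ n ∈ J, 0 < n) : ∑ n ∈ J, k n ∈ IPkP k := by
  refine ⟨J.image fun n : ℕ => k n, ?_, by rw [Finset.sum_image fun x _ y _ h => hk h]⟩
  intro x hx
  obtain ⟨n, hn, rfl⟩ := Finset.mem_image.mp hx
  exact ⟨n, Int.natCast_pos.mpr (hJ n hn), rfl⟩

/-- Listing `J` in decreasing order gives an expansion of `∑ n ∈ J, k n`. -/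
theorem LengthVecSpec.apply_sum {k : ℤ → ℤ} {lab : ℕ → ℕ} {R : ℤ → ℕ →₀ ℕ}
    (hR : LengthVecSpec k lab R) {J : Finset ℕ} (hJ : ∀ n ∈ J, 0 < n) :
    R (∑ n ∈ J, k n) = ∑ n ∈ J, Finsupp.single (lab n) 1 := by
  set e := J.orderEmbOfFin rfl
  have hsum {M : Type} [AddCommMonoid M] (f : ℕ → M) :
      ∑ i : Fin J.card, f (e i.rev) = ∑ n ∈ J, f n := by
    calc ∑ i, f (e i.rev) = ∑ i, f (e i) := Fintype.sum_equiv Fin.revPerm _ _ fun _ => rfl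
      _ = ∑ n ∈ Finset.univ.image e, f n :=
        (Finset.sum_image fun x _ y _ h => e.injective h).symm
      _ = ∑ n ∈ J, f n := by rw [J.image_orderEmbOfFin_univ rfl]
  have hpos (i : Fin J.card) : 0 < e i := hJ _ (J.orderEmbOfFin_mem rfl i)
  have hexp : IsExpansion k (∑ n ∈ J, k n) J.card fun i => (e i.rev : ℤ) := by
    refine ⟨fun i => Nat.cast_ne_zero.mpr (hpos i.rev).ne', fun i₁ i₂ h => ?_, (hsum _).symm⟩
    simp only [Nat.abs_cast, Nat.cast_lt]
    exact e.strictMono (Fin.rev_lt_rev.mpr h)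
  rw [hR _ _ _ hexp, ← hsum]
  simp only [Int.natAbs_natCast]

theorem exists_finset_sum_single_eq {α ι : Type*} {f : α → ι} {s : Set α}
    (hf : ∀ i, (s ∩ f ⁻¹' {i}).Infinite) (m : ι →₀ ℕ) :
    ∃ J : Finset α, ↑J ⊆ s ∧ ∑ a ∈ J, Finsupp.single (f a) 1 = m := by
  classical
  choose F hFs hFcard using fun i => (hf i).exists_subset_card_eq (m i)
  have hdisj : (m.support : Set ι).PairwiseDisjoint F := fun i _ j _ hij =>
    Finset.disjoint_left.mpr fun a hai haj => hij ((hFs i hai).2.symm.trans (hFs j haj).2)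
  refine ⟨m.support.biUnion F, ?_, ?_⟩
  · intro a ha
    obtain ⟨i, -, hai⟩ := Finset.mem_biUnion.mp ha
    exact (hFs i hai).1
  · have hfiber (i : ι) : ∑ a ∈ F i, Finsupp.single (f a) 1 = Finsupp.single i (m i) := by
      rw [Finset.sum_congr rfl fun a ha => by rw [(hFs i ha).2], Finset.sum_const, hFcard,
        Finsupp.smul_single_one]
    rw [Finset.sum_biUnion hdisj, Finset.sum_congr rfl fun i _ => hfiber i]
    exact Finsupp.sum_single m

theorem PartitionSpec.infinite_pos_inter_fiber {D : ℕ → Set ℕ} {lab : ℕ → ℕ}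
    (hD : PartitionSpec D lab) (ℓ : ℕ) : ({n | 0 < n} ∩ lab ⁻¹' {ℓ}).Infinite := by
  have hDℓ : D ℓ \ {0} ⊆ {n | 0 < n} ∩ lab ⁻¹' {ℓ} := fun n ⟨hn, hn0⟩ => by
    refine ⟨Nat.pos_of_ne_zero hn0, by_contra fun hne => ?_⟩
    exact (hD.2.1 _ _ hne).subset ⟨hD.2.2 n, hn⟩
  exact ((hD.1 ℓ).sdiff (Set.finite_singleton 0)).mono hDℓ

theorem exists_mem_IPkP_lengthVec_eq {b : ℕ} (hb : 1 ≤ b) {k : ℤ → ℤ} (hk : IsExpanding b k)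
    {D : ℕ → Set ℕ} {lab : ℕ → ℕ} (hD : PartitionSpec D lab) {R : ℤ → ℕ →₀ ℕ}
    (hR : LengthVecSpec k lab R) (m : ℕ →₀ ℕ) : ∃ t ∈ IPkP k, R t = m := by
  obtain ⟨J, hJ, hJm⟩ := exists_finset_sum_single_eq hD.infinite_pos_inter_fiber m
  exact ⟨_, sum_mem_IPkP (hk.strictMono hb).injective hJ, (hR.apply_sum hJ).trans hJm⟩

theorem labelInd_injective : Function.Injective labelInd := fun _ _ h =>
  Set.ext fun m => decide_eq_decide.mp (congrFun h m)

theorem chiB_inter_preimage (S : Set ℤ) (R : ℤ → ℕ →₀ ℕ) (M : Set (ℕ →₀ ℕ)) (t : ℤ) :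
    chiB (S ∩ R ⁻¹' M) t = (chiB S t && labelInd M (R t)) :=
  Bool.eq_iff_iff.mpr (by simp [chiB, labelInd])

theorem isEmbedding_labelInd_val :
    @IsEmbedding Lab _ labTopL _ fun p : Lab => labelInd p.1 := by
  let := labTop
  let := labTopL
  exact ⟨(IsInducing.induced labelInd).comp (IsInducing.induced Subtype.val),
    labelInd_injective.comp Subtype.val_injective⟩

theorem isEmbedding_chiB_inter_preimage (S : Set ℤ) (R : ℤ → ℕ →₀ ℕ) (τ : (ℕ →₀ ℕ) → ℤ)
    (hτS : ∀ m, τ m ∈ S) (hRτ : ∀ m, R (τ m) = m) :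
    @IsEmbedding Lab _ labTopL _ fun p : Lab => chiB (S ∩ R ⁻¹' p.1) := by
  let := labTopL
  have hcomp : (fun p : Lab => labelInd p.1) =
      (fun x m => x (τ m)) ∘ fun p : Lab => chiB (S ∩ R ⁻¹' p.1) := by
    funext p m
    exact Bool.eq_iff_iff.mpr (by simp [labelInd, chiB, hτS, hRτ])
  have hcont : Continuous fun p : Lab => chiB (S ∩ R ⁻¹' p.1) := by
    simp_rw [funext (chiB_inter_preimage S R _)]
    exact continuous_pi fun t => (continuous_of_discreteTopology (f := (chiB S t && ·))).comp
      ((continuous_apply (R t)).comp isEmbedding_labelInd_val.continuous)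
  have hτ : Continuous fun (x : ℤ → Bool) (m : ℕ →₀ ℕ) => x (τ m) :=
    continuous_pi fun m => continuous_apply (τ m)
  have he := isEmbedding_labelInd_val
  rw [hcomp] at he
  exact ⟨IsInducing.of_comp hcont hτ he.isInducing, he.injective.of_comp⟩

theorem stmt15_general (b : ℕ) (hb : 3 ≤ b) (k : ℤ → ℤ) (hk : IsExpanding b k)
    (D : ℕ → Set ℕ) (lab : ℕ → ℕ) (hD : PartitionSpec D lab)
    (R : ℤ → ℕ →₀ ℕ) (hR : LengthVecSpec k lab R) :
    Function.Injective (fun p : Lab => xL k R p.1) ∧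
    Function.Injective (fun p : Lab => xLP k R p.1) ∧
    @Continuous Lab (ℤ → Bool) labTopL _ (fun p : Lab => xL k R p.1) ∧
    @Continuous Lab (ℤ → Bool) labTopL _ (fun p : Lab => xLP k R p.1) ∧
    @Topology.IsEmbedding Lab (ℤ → Bool) labTopL _ (fun p : Lab => xL k R p.1) ∧
    @Topology.IsEmbedding Lab (ℤ → Bool) labTopL _ (fun p : Lab => xLP k R p.1) := by
  let := labTopL
  choose τ hτP hRτ using exists_mem_IPkP_lengthVec_eq (by omega) hk hD hR
  have hx : IsEmbedding fun p : Lab => xL k R p.1 :=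
    isEmbedding_chiB_inter_preimage (IPk k) R τ (fun m => IPkP_subset_IPk k (hτP m)) hRτ
  have hxP : IsEmbedding fun p : Lab => xLP k R p.1 := by
    have hsetAP (M : Set (ℕ →₀ ℕ)) : setAP k R M = IPk k ∩ IPkP k ∩ R ⁻¹' M :=
      Set.inter_right_comm _ _ _
    simpa only [xLP, hsetAP] using isEmbedding_chiB_inter_preimage (IPk k ∩ IPkP k) R τ
      (fun m => ⟨IPkP_subset_IPk k (hτP m), hτP m⟩) hRτ
  exact ⟨hx.injective, hxP.injective, hx.continuous, hxP.continuous, hx, hxP⟩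

/-- With the standing labeled-subshift setup, the maps `𝓜 ↦ x[𝓜]` and `𝓜 ↦ x₊[𝓜]` from
the space of labels into `{0,1}^ℤ` are injective and continuous, hence homeomorphisms onto
their images (topological embeddings). -/
theorem stmt15 (b : ℕ) (hb : 3 ≤ b) (k : ℤ → ℤ) (hk : IsExpanding b k)
    (hk1 : (b : ℤ) + 1 < k 1)
    (D : ℕ → Set ℕ) (lab : ℕ → ℕ) (hD : PartitionSpec D lab)
    (R : ℤ → ℕ →₀ ℕ) (hR : LengthVecSpec k lab R) :
    Function.Injective (fun p : Lab => xL k R p.1) ∧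
    Function.Injective (fun p : Lab => xLP k R p.1) ∧
    @Continuous Lab (ℤ → Bool) labTopL _ (fun p : Lab => xL k R p.1) ∧
    @Continuous Lab (ℤ → Bool) labTopL _ (fun p : Lab => xLP k R p.1) ∧
    @Topology.IsEmbedding Lab (ℤ → Bool) labTopL _ (fun p : Lab => xL k R p.1) ∧
    @Topology.IsEmbedding Lab (ℤ → Bool) labTopL _ (fun p : Lab => xLP k R p.1) :=
  stmt15_general b hb k hk D lab hD R hR
end
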